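/- arXiv:1805.10409 — 8 statements merged into one kernel-verified Lean document; each statement's English description precedes it below -/
import Mathlib

section
/- For all positive integers n and e, the cardinality of the n-dimensional Lee ball of radius e equals the sum over i from 0 to min(n,e) of 2^i * C(n,i) * C(e,i). -/
/-!
Write `K(n, r)` for the number of points of `B^n(r)` and `P(n, r)` for the number of points of
`B^(n+1)(r)` whose first coordinate is positive. Splitting `B^(n+1)(r)` by the sign of the first
coordinate, the points with first coordinate `0` form a copy of `B^n(r)` and negation exchanges
the negative and positive parts, so `K(n+1, r) = K(n, r) + 2 P(n, r)`. Lowering a positive first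
coordinate by one is a bijection from the positive part of `B^(n+1)(r+1)` onto the nonnegative
part of `B^(n+1)(r)`, so `P(n, r+1) = K(n, r) + P(n, r)`. By Pascal's rule the sums
`∑ 2^i C(n,i) C(r,i)` and `∑ 2^i C(n,i) C(r,i+1)` satisfy the same two recursions.
-/

open Finset

noncomputable def leeBall (n r : ℕ) : Finset (Fin n → ℤ) :=
  {x ∈ Fintype.piFinset fun _ => Icc (-(r : ℤ)) r | ∑ i, |x i| ≤ r}

section LeeBall

variable {n r : ℕ}

theorem mem_leeBall {x : Fin n → ℤ} : x ∈ leeBall n r ↔ ∑ i, |x i| ≤ r := by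
  refine mem_filter.trans (and_iff_right_of_imp fun h => Fintype.mem_piFinset.2 fun i => ?_)
  rw [mem_Icc, ← abs_le]
  exact (single_le_sum (fun j _ => abs_nonneg (x j)) (mem_univ i)).trans h

theorem abs_apply_le_of_mem_leeBall {x : Fin n → ℤ} (hx : x ∈ leeBall n r) (i : Fin n) :
    |x i| ≤ r :=
  abs_le.2 (mem_Icc.1 (Fintype.mem_piFinset.1 (mem_filter.1 hx).1 i))

theorem mem_leeBall_succ {x : Fin (n + 1) → ℤ} :
    x ∈ leeBall (n + 1) r ↔ |x 0| + ∑ i, |Fin.tail x i| ≤ r := by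
  rw [mem_leeBall, Fin.sum_univ_succ]
  rfl

theorem cons_mem_leeBall {t : ℤ} {y : Fin n → ℤ} :
    Fin.cons t y ∈ leeBall (n + 1) r ↔ |t| + ∑ i, |y i| ≤ r := by
  rw [mem_leeBall_succ, Fin.cons_zero, Fin.tail_cons]

theorem card_leeBall_zero (r : ℕ) : #(leeBall 0 r) = 1 :=
  card_eq_one.2 ⟨0, eq_singleton_iff_unique_mem.2
    ⟨mem_leeBall.2 (by simp), fun x _ => Subsingleton.elim x 0⟩⟩

theorem card_filter_head_eq_zero :
    #{x ∈ leeBall (n + 1) r | x 0 = 0} = #(leeBall n r) := by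
  refine card_nbij' Fin.tail (fun y => Fin.cons 0 y) (fun x hx => ?_) (fun y hy => ?_)
    (fun x hx => ?_) (fun y _ => Fin.tail_cons _ _)
  · rw [mem_coe, mem_filter, mem_leeBall_succ] at hx
    rw [mem_coe, mem_leeBall]
    simpa [hx.2] using hx.1
  · rw [mem_coe, mem_leeBall] at hy
    rw [mem_coe, mem_filter, cons_mem_leeBall]
    simpa using hy
  · rw [mem_coe, mem_filter] at hx
    rw [← hx.2]
    exact Fin.cons_self_tail x

theorem card_filter_apply_neg_eq_card_filter_apply_pos (i : Fin n) :
    #{x ∈ leeBall n r | x i < 0} = #{x ∈ leeBall n r | 0 < x i} := by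
  refine card_nbij' Neg.neg Neg.neg (fun x hx => ?_) (fun x hx => ?_)
    (fun x _ => neg_neg x) (fun x _ => neg_neg x) <;>
  simpa [mem_leeBall] using hx

theorem card_filter_head_pos_succ :
    #{x ∈ leeBall (n + 1) (r + 1) | 0 < x 0} = #{x ∈ leeBall (n + 1) r | 0 ≤ x 0} := by
  refine card_nbij' (fun x => Fin.cons (x 0 - 1) (Fin.tail x))
    (fun x => Fin.cons (x 0 + 1) (Fin.tail x)) (fun x hx => ?_) (fun x hx => ?_)
    (fun x _ => by simp) (fun x _ => by simp)
  · simp only [mem_coe, mem_filter, mem_leeBall_succ, Fin.cons_zero, Fin.tail_cons] at hx ⊢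
    rw [abs_of_pos hx.2] at hx
    rw [abs_of_nonneg (by omega)]
    push_cast at hx
    omega
  · simp only [mem_coe, mem_filter, mem_leeBall_succ, Fin.cons_zero, Fin.tail_cons] at hx ⊢
    rw [abs_of_nonneg hx.2] at hx
    rw [abs_of_pos (by omega)]
    push_cast
    omega

theorem card_filter_head_nonneg :
    #{x ∈ leeBall (n + 1) r | 0 ≤ x 0} =
      #(leeBall n r) + #{x ∈ leeBall (n + 1) r | 0 < x 0} := by
  rw [← card_filter_head_eq_zero, ← card_union_of_disjoint, ← filter_or]
  · simp_rw [le_iff_eq_or_lt, eq_comm]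
  · exact disjoint_filter.2 fun x _ h h' => by omega

theorem card_leeBall_succ :
    #(leeBall (n + 1) r) = #(leeBall n r) + 2 * #{x ∈ leeBall (n + 1) r | 0 < x 0} := by
  rw [← card_filter_add_card_filter_not (fun x : Fin (n + 1) → ℤ => x 0 < 0),
    card_filter_apply_neg_eq_card_filter_apply_pos]
  simp only [not_lt, card_filter_head_nonneg]
  ring

end LeeBall

def leeSum (n e : ℕ) : ℕ := ∑ i ∈ range (n + 1), 2 ^ i * n.choose i * e.choose i

def leePosSum (n e : ℕ) : ℕ := ∑ i ∈ range (n + 1), 2 ^ i * n.choose i * e.choose (i + 1)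

theorem leeSum_zero_left (e : ℕ) : leeSum 0 e = 1 := by
  simp [leeSum]

theorem leePosSum_zero_right (n : ℕ) : leePosSum n 0 = 0 := by
  simp [leePosSum]

theorem leePosSum_succ_right (n e : ℕ) :
    leePosSum n (e + 1) = leeSum n e + leePosSum n e := by
  simp only [leePosSum, leeSum, Nat.choose_succ_succ', mul_add, sum_add_distrib]

theorem leeSum_succ_left (n e : ℕ) : leeSum (n + 1) e = leeSum n e + 2 * leePosSum n e := by
  set f := fun i => 2 ^ i * n.choose i * e.choose i
  calc leeSum (n + 1) e
      = ∑ i ∈ range (n + 1), 2 ^ (i + 1) * (n + 1).choose (i + 1) * e.choose (i + 1) + 1 := by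
        simp [leeSum, sum_range_succ' _ (n + 1)]
    _ = (∑ i ∈ range (n + 1), f (i + 1) + f 0) + 2 * leePosSum n e := by
        simp only [f, Nat.choose_succ_succ', leePosSum, mul_sum, mul_add, add_mul, sum_add_distrib]
        simp only [pow_succ, Nat.choose_zero_right]
        ring_nf
    _ = leeSum n e + 2 * leePosSum n e := by
        rw [← sum_range_succ', sum_range_succ, leeSum]
        simp [f]

theorem leeSum_eq_sum_range_min (n e : ℕ) :
    leeSum n e = ∑ i ∈ range (min n e + 1), 2 ^ i * n.choose i * e.choose i := by
  refine (sum_subset (range_subset_range.2 (by omega)) fun i hi hi' => ?_).symm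
  rw [mem_range] at hi hi'
  rw [Nat.choose_eq_zero_of_lt (n := e) (by omega), mul_zero]

theorem card_leeBall (n r : ℕ) : #(leeBall n r) = leeSum n r := by
  induction n generalizing r with
  | zero => rw [card_leeBall_zero, leeSum_zero_left]
  | succ n ih =>
    have card_pos : ∀ r, #{x ∈ leeBall (n + 1) r | 0 < x 0} = leePosSum n r := by
      intro r
      induction r with
      | zero =>
        rw [leePosSum_zero_right, card_eq_zero, filter_eq_empty_iff]
        intro x hx
        have := abs_apply_le_of_mem_leeBall hx 0
        grind
      | succ r ihr =>
        rw [card_filter_head_pos_succ, card_filter_head_nonneg, ih, ihr, leePosSum_succ_right]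
    rw [card_leeBall_succ, ih, card_pos, leeSum_succ_left]

theorem lee_ball_card_general (n e : ℕ) :
    Set.ncard {x : Fin n → ℤ | ∑ i, |x i| ≤ (e : ℤ)} =
      ∑ i ∈ Finset.range (min n e + 1), 2 ^ i * n.choose i * e.choose i := by
  have hball : {x : Fin n → ℤ | ∑ i, |x i| ≤ (e : ℤ)} = leeBall n e :=
    Set.ext fun _ => mem_leeBall.symm
  rw [hball, Set.ncard_coe_finset, card_leeBall, leeSum_eq_sum_range_min]

theorem lee_ball_card (n e : ℕ) (hn : 0 < n) (he : 0 < e) :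
    Set.ncard {x : Fin n → ℤ | ∑ i, |x i| ≤ (e : ℤ)} =
      ∑ i ∈ Finset.range (min n e + 1), 2 ^ i * n.choose i * e.choose i :=
  lee_ball_card_general n e
end

section
/- Let n = Σ_{j=0}^{h-1} n_j·3^j and e = Σ_{j=0}^{h-1} e_j·3^j with digits n_j, e_j ∈ {0,1,2}. Then k(n,e) ≡ Π_{j=0}^{h-1} k(n_j, e_j) (mod 3), where k(n,e) = Σ_i 2^i C(n,i) C(e,i) is the size of the Lee ball of radius e in dimension n. -/
/-!
Lucas's theorem gives `C(p a + r, p c + t) ≡ C(a, c) C(r, t) (mod p)` for base-`p` digits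
`r, t`, and Fermat gives `2 ^ (p c + t) ≡ 2 ^ c 2 ^ t`. Grouping the indices `i = p c + t` of
`k(p a + r, p b + s)` by their last digit, the sum therefore factors mod `p` as
`k(a, b) k(r, s)`; peeling off one base-`p` digit at a time gives the theorem for `p = 3`.
-/

/-- The cardinality of the `n`-dimensional Lee ball of radius `e`. -/
def leeK (n e : ℕ) : ℕ := ∑ i ∈ Finset.range (min n e + 1), 2 ^ i * n.choose i * e.choose i

open Finset

theorem Finset.sum_range_mul_eq_sum_sum {M : Type*} [AddCommMonoid M] (f : ℕ → M) (p K : ℕ) :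
    ∑ i ∈ range (p * K), f i = ∑ c ∈ range K, ∑ t ∈ range p, f (p * c + t) := by
  induction K with
  | zero => simp
  | succ K ih => rw [Nat.mul_succ, sum_range_add, ih, sum_range_succ]

theorem leeK_eq_sum_range {n e M : ℕ} (hM : min n e < M) :
    leeK n e = ∑ i ∈ range M, 2 ^ i * n.choose i * e.choose i := by
  refine sum_subset (range_subset_range.mpr (by omega)) fun i _ hi => ?_
  rw [mem_range, not_lt, Nat.succ_le_iff, min_lt_iff] at hi
  rcases hi with h | h <;> simp [Nat.choose_eq_zero_of_lt h]

section Prime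

variable {p : ℕ} [Fact p.Prime]

theorem cast_leeK_eq_sum_range {n e M : ℕ} (hM : min n e < M) :
    (leeK n e : ZMod p) = ∑ i ∈ range M, (2 : ZMod p) ^ i * n.choose i * e.choose i := by
  rw [leeK_eq_sum_range hM]
  push_cast
  rfl

theorem cast_choose_mul_add_mul_add {a r c t : ℕ} (hr : r < p) (ht : t < p) :
    ((p * a + r).choose (p * c + t) : ZMod p) = r.choose t * a.choose c := by
  have hp := (Fact.out : p.Prime).pos
  have lucas := Choose.choose_modEq_choose_mod_mul_choose_div_nat (p := p)
    (n := p * a + r) (k := p * c + t)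
  simp only [Nat.mul_add_mod, Nat.mod_eq_of_lt hr, Nat.mod_eq_of_lt ht, Nat.mul_add_div hp,
    Nat.div_eq_of_lt hr, Nat.div_eq_of_lt ht, add_zero] at lucas
  exact_mod_cast (ZMod.natCast_eq_natCast_iff _ _ _).mpr (by simpa using lucas)

theorem ZMod.two_pow_mul_add (c t : ℕ) : (2 : ZMod p) ^ (p * c + t) = 2 ^ c * 2 ^ t := by
  rw [pow_add, pow_mul, ZMod.pow_card]

theorem cast_leeK_mul_add_mul_add {a b r s : ℕ} (hr : r < p) (hs : s < p) :
    (leeK (p * a + r) (p * b + s) : ZMod p) = leeK a b * leeK r s := by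
  have hK : min (p * a + r) (p * b + s) < p * (min a b + 1) := by
    rw [mul_add_one, ← Nat.mul_min_mul_left]
    omega
  rw [cast_leeK_eq_sum_range hK, sum_range_mul_eq_sum_sum,
    cast_leeK_eq_sum_range (lt_add_one (min a b)),
    cast_leeK_eq_sum_range (lt_of_le_of_lt (min_le_left r s) hr), sum_mul_sum]
  refine sum_congr rfl fun c _ => sum_congr rfl fun t ht => ?_
  have ht : t < p := mem_range.mp ht
  rw [ZMod.two_pow_mul_add, cast_choose_mul_add_mul_add hr ht, cast_choose_mul_add_mul_add hs ht]
  ring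

theorem cast_leeK_digits_eq_prod (h : ℕ) {nd ed : ℕ → ℕ}
    (hnd : ∀ j < h, nd j < p) (hed : ∀ j < h, ed j < p) :
    (leeK (∑ j ∈ range h, nd j * p ^ j) (∑ j ∈ range h, ed j * p ^ j) : ZMod p)
      = ∏ j ∈ range h, (leeK (nd j) (ed j) : ZMod p) := by
  induction h generalizing nd ed with
  | zero => simp [leeK]
  | succ h ih =>
    have peel (d : ℕ → ℕ) : ∑ j ∈ range (h + 1), d j * p ^ j
        = p * ∑ j ∈ range h, d (j + 1) * p ^ j + d 0 := by
      rw [sum_range_succ', mul_sum]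
      simp only [pow_succ, pow_zero, mul_one]
      congr 1
      exact sum_congr rfl fun j _ => by ring
    rw [peel, peel, cast_leeK_mul_add_mul_add (hnd 0 (by omega)) (hed 0 (by omega)),
      ih (fun j hj => hnd (j + 1) (by omega)) (fun j hj => hed (j + 1) (by omega)),
      prod_range_succ']

end Prime

theorem leeK_multiplicative_mod_three (h : ℕ) (nd ed : ℕ → ℕ)
    (hnd : ∀ j < h, nd j < 3) (hed : ∀ j < h, ed j < 3) (n e : ℕ)
    (hn : n = ∑ j ∈ Finset.range h, nd j * 3 ^ j)
    (he : e = ∑ j ∈ Finset.range h, ed j * 3 ^ j) :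
    leeK n e ≡ ∏ j ∈ Finset.range h, leeK (nd j) (ed j) [MOD 3] := by
  have : Fact (Nat.Prime 3) := ⟨Nat.prime_three⟩
  rw [← ZMod.natCast_eq_natCast_iff, hn, he, Nat.cast_prod]
  exact cast_leeK_digits_eq_prod h hnd hed
end

section
/- If every digit in the base-3 representation of e belongs to {0,2} (i.e., e contains no digit 1 in base 3), then k(n,e) is not divisible by 3 for all positive integers n. -/
open Polynomial

theorem coeff_one_add_C_mul_X_pow {R : Type*} [CommSemiring R] (a : R) (n k : ℕ) :
    ((1 + C a * X) ^ n).coeff k = a ^ k * n.choose k := by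
  simp only [add_comm (1 : R[X]), add_pow, one_pow, mul_one, mul_pow, ← C_pow, finsetSum_coeff,
    coeff_C_mul, ← Nat.cast_comm, coeff_natCast_mul, coeff_X_pow]
  simpa [mul_comm] using fun h => by simp [Nat.choose_eq_zero_of_lt h]

theorem coeff_expand_mul_of_natDegree_lt {R : Type*} [CommSemiring R] {p r : ℕ} (hr : r < p)
    (P : R[X]) {Q : R[X]} (hQ : Q.natDegree < p + r) (m : ℕ) :
    (expand R p P * Q).coeff (p * m + r) = P.coeff m * Q.coeff r := by
  have hp : 0 < p := by omega
  rw [coeff_mul, Finset.sum_eq_single (p * m, r), coeff_expand_mul' hp]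
  · rintro ⟨i, j⟩ hij hne
    rw [Finset.HasAntidiagonal.mem_antidiagonal] at hij
    dsimp only at hij ⊢
    rw [coeff_expand hp]
    split_ifs with hpi
    · obtain ⟨t, rfl⟩ := hpi
      have htm : t < m := by
        by_contra! hmt
        obtain rfl | hmt := hmt.eq_or_lt
        · exact hne (Prod.ext rfl (by simpa using hij))
        · have : p * (m + 1) ≤ p * t := Nat.mul_le_mul_left p hmt
          rw [mul_add] at this
          omega
      have : p * (t + 1) ≤ p * m := Nat.mul_le_mul_left p htm
      rw [mul_add] at this
      exact mul_eq_zero_of_right _ (coeff_eq_zero_of_natDegree_lt (by omega))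
    · rw [zero_mul]
  · simp

theorem ZMod.pow_eq_expand_pow_div_mul_pow_mod {p : ℕ} [Fact p.Prime] (P : (ZMod p)[X])
    (n : ℕ) : P ^ n = expand (ZMod p) p (P ^ (n / p)) * P ^ (n % p) := by
  rw [ZMod.expand_card, ← pow_mul, ← pow_add, mul_comm, Nat.div_add_mod]

theorem leeK_eq_sum_range_succ (n e : ℕ) :
    leeK n e = ∑ i ∈ Finset.range (e + 1), 2 ^ i * n.choose i * e.choose i := by
  refine Finset.sum_subset (by simp) fun i hie hi => ?_
  simp only [Finset.mem_range, not_lt] at hie hi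
  simp [Nat.choose_eq_zero_of_lt (by omega : n < i)]

theorem cast_leeK_eq_coeff {R : Type*} [CommSemiring R] (n e : ℕ) :
    (leeK n e : R) = ((1 + C 2 * X) ^ n * (1 + X) ^ e : R[X]).coeff e := by
  rw [coeff_mul, Finset.Nat.sum_antidiagonal_eq_sum_range_succ_mk, leeK_eq_sum_range_succ]
  push_cast
  refine Finset.sum_congr rfl fun i hi => ?_
  rw [coeff_one_add_C_mul_X_pow, coeff_one_add_X_pow,
    Nat.choose_symm (Nat.le_of_lt_succ (Finset.mem_range.1 hi))]

theorem cast_leeK_eq_leeK_div_mul_leeK_mod {p : ℕ} [Fact p.Prime] (n e : ℕ) :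
    (leeK n e : ZMod p) = leeK (n / p) (e / p) * leeK (n % p) (e % p) := by
  have hp := (Fact.out : p.Prime).pos
  have hdeg : ((1 + C 2 * X) ^ (n % p) * (1 + X) ^ (e % p) : (ZMod p)[X]).natDegree
      < p + e % p := by
    refine natDegree_mul_le.trans_lt (Nat.add_lt_add_of_lt_of_le ?_ ?_)
    · exact (natDegree_pow_le_of_le _ (by compute_degree)).trans_lt
        (by simpa using Nat.mod_lt n hp)
    · exact (natDegree_pow_le_of_le _ (by compute_degree)).trans (by simp)
  have hsplit : ((1 + C 2 * X) ^ n * (1 + X) ^ e : (ZMod p)[X]) =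
      expand (ZMod p) p ((1 + C 2 * X) ^ (n / p) * (1 + X) ^ (e / p)) *
        ((1 + C 2 * X) ^ (n % p) * (1 + X) ^ (e % p)) := by
    rw [ZMod.pow_eq_expand_pow_div_mul_pow_mod _ n, ZMod.pow_eq_expand_pow_div_mul_pow_mod _ e,
      map_mul]
    ring
  have hcoeff := coeff_expand_mul_of_natDegree_lt (Nat.mod_lt e hp)
    ((1 + C 2 * X) ^ (n / p) * (1 + X) ^ (e / p)) hdeg (e / p)
  rw [Nat.div_add_mod, ← hsplit] at hcoeff
  rw [cast_leeK_eq_coeff, cast_leeK_eq_coeff, cast_leeK_eq_coeff, hcoeff]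

theorem cast_leeK_ne_zero_of_lt_three {s r : ℕ} (hs : s < 3) (hr : r = 0 ∨ r = 2) :
    (leeK s r : ZMod 3) ≠ 0 := by
  interval_cases s <;> rcases hr with rfl | rfl <;> decide

theorem cast_leeK_ne_zero_of_digits_three (n : ℕ) {e : ℕ}
    (he : ∀ d ∈ Nat.digits 3 e, d = 0 ∨ d = 2) : (leeK n e : ZMod 3) ≠ 0 := by
  induction e using Nat.strong_induction_on generalizing n with
  | _ e ih =>
    obtain rfl | hpos := e.eq_zero_or_pos
    · simp [leeK]
    have hdigits := Nat.digits_def' (by norm_num : 1 < 3) hpos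
    rw [cast_leeK_eq_leeK_div_mul_leeK_mod]
    refine mul_ne_zero (ih _ (Nat.div_lt_self hpos (by norm_num)) _ fun d hd => ?_)
      (cast_leeK_ne_zero_of_lt_three (Nat.mod_lt n (by norm_num)) (he _ ?_))
    · exact he d (hdigits ▸ List.mem_cons_of_mem _ hd)
    · exact hdigits ▸ List.mem_cons_self

theorem leeK_not_dvd_three_of_no_digit_one (e : ℕ)
    (he : ∀ d ∈ Nat.digits 3 e, d = 0 ∨ d = 2) :
    ∀ n : ℕ, 0 < n → ¬ (3 ∣ leeK n e) := fun n _ hdvd =>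
  cast_leeK_ne_zero_of_digits_three n he ((ZMod.natCast_eq_zero_iff _ _).mpr hdvd)
end

section
/- For all positive integers n and e, p(n,e) ≡ 2 · Σ_{0 ≤ i ≤ e, i ≢ e (mod 3)} k(n−1, i) (mod 3), where p(n,e) = Σ_{i=0}^{e} 2i² k(n−1, e−i). -/
/-- `p(n,e) = Σ_{i=0}^{e} 2 i² k(n−1, e−i)`. -/
def leeP (n e : ℕ) : ℕ := ∑ i ∈ Finset.range (e + 1), 2 * i ^ 2 * leeK (n - 1) (e - i)

/-!
Modulo 3 a square is 0 or 1 according as the base is divisible by 3 or not, so in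
`p(n,e) = Σ 2 i² k(n−1, e−i)` the term with index `i` contributes `2 k(n−1, e−i)` exactly when
`3 ∤ i`, that is, when `e − i ≢ e (mod 3)`. Reindexing by `e − i` gives the formula.
-/

open Finset

theorem Nat.sq_modEq_three (i : ℕ) : i ^ 2 ≡ if i % 3 = 0 then 0 else 1 [MOD 3] := by
  have hi : i % 3 < 3 := Nat.mod_lt i (by norm_num)
  unfold Nat.ModEq
  rw [Nat.pow_mod]
  interval_cases h : i % 3 <;> simp

theorem sum_range_two_mul_sq_mul_sub_modEq_three (f : ℕ → ℕ) (e : ℕ) :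
    ∑ i ∈ range (e + 1), 2 * i ^ 2 * f (e - i) ≡
      2 * ∑ i ∈ (range (e + 1)).filter (fun i => i % 3 ≠ e % 3), f i [MOD 3] := by
  rw [← sum_range_reflect, mul_sum, sum_filter]
  refine Nat.ModEq.sum fun j hj => ?_
  have hj : j ≤ e := Nat.lt_succ_iff.mp (mem_range.mp hj)
  rw [Nat.add_sub_cancel, Nat.sub_sub_self hj]
  have hsq := ((Nat.sq_modEq_three (e - j)).mul_left 2).mul_right (f j)
  refine hsq.trans ?_
  have hmod : (e - j) % 3 = 0 ↔ j % 3 = e % 3 := by omega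
  by_cases h : j % 3 = e % 3 <;> simp [h, hmod, Nat.ModEq.refl]

theorem leeP_mod_three_formula_general (n e : ℕ) :
    leeP n e ≡
      2 * ∑ i ∈ (Finset.range (e + 1)).filter (fun i => i % 3 ≠ e % 3),
        leeK (n - 1) i [MOD 3] :=
  sum_range_two_mul_sq_mul_sub_modEq_three (leeK (n - 1)) e

theorem leeP_mod_three_formula (n e : ℕ) (hn : 0 < n) (he : 0 < e) :
    leeP n e ≡
      2 * ∑ i ∈ (Finset.range (e + 1)).filter (fun i => i % 3 ≠ e % 3),
        leeK (n - 1) i [MOD 3] :=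
  leeP_mod_three_formula_general n e
end

section
/- Let p be a prime and let a = Σ_{i=0}^{m−1} a_i p^i, b = Σ_{i=0}^{m−1} b_i p^i with m ≥ 2, 0 ≤ a_i, b_i < p, and a_{m−1} = b_{m−1}. If a < b then the Davis–Webb product [a_{m−1},a_{m−2} ; b_{m−1},b_{m−2}] · Π_{i=1}^{m−2} [a_i ; b_i]^{−1} [a_i,a_{i−1} ; b_i,b_{i−1}] ≡ 0 (mod p²), so the Davis–Webb congruence C(a,b) ≡ (that product) (mod p²) holds even when a < b. -/
/-!
Compare `a < b` digit by digit from the top: the highest digit where they differ is some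
`j < m - 1` with `a_j < b_j`, while `a_{j+1} = b_{j+1}`. Hence the symbol
`[a_{j+1}, a_j ; b_{j+1}, b_j]` falls in its second case and equals `p · [a_j ; b_j] = p · p`,
so one factor of the Davis–Webb product vanishes mod `p²`. Since also `C(a, b) = 0`, the
congruence holds trivially.
-/

/-- Davis–Webb symbol `[a;b]` for digits `0 ≤ a, b < p`. -/
def dwS (p a b : ℕ) : ℕ := if b ≤ a then a.choose b else p

/-- Davis–Webb symbol `[a,b;c,d]` for digits `0 ≤ a,b,c,d < p`. -/
def dwD (p a b c d : ℕ) : ℕ :=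
  if c * p + d ≤ a * p + b then (a * p + b).choose (c * p + d) else p * dwS p b d

open Finset

lemma sum_range_mul_pow_lt_pow {p n : ℕ} {d : ℕ → ℕ} (hd : ∀ i < n, d i < p) :
    ∑ i ∈ range n, d i * p ^ i < p ^ n := by
  induction n with
  | zero => simp
  | succ n ih =>
    calc ∑ i ∈ range (n + 1), d i * p ^ i
        = ∑ i ∈ range n, d i * p ^ i + d n * p ^ n := sum_range_succ _ _
      _ < p ^ n + d n * p ^ n := by
        gcongr
        exact ih fun i hi => hd i (by omega)
      _ = (d n + 1) * p ^ n := by ring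
      _ ≤ p * p ^ n := Nat.mul_le_mul_right _ (hd n (by omega))
      _ = p ^ (n + 1) := (pow_succ' p n).symm

lemma exists_lt_of_sum_mul_pow_lt {p m : ℕ} {A B : ℕ → ℕ} (hB : ∀ i < m, B i < p)
    (hlt : ∑ i ∈ range m, A i * p ^ i < ∑ i ∈ range m, B i * p ^ i) :
    ∃ j < m, A j < B j ∧ ∀ i, j < i → i < m → A i = B i := by
  induction m with
  | zero => simp at hlt
  | succ m ih =>
    rw [sum_range_succ, sum_range_succ] at hlt
    rcases lt_trichotomy (A m) (B m) with hm | hm | hm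
    · exact ⟨m, by omega, hm, fun i hi hi' => by omega⟩
    · obtain ⟨j, hj, hAB, habove⟩ := ih (fun i hi => hB i (by omega)) (by rw [hm] at hlt; omega)
      refine ⟨j, by omega, hAB, fun i hji him => ?_⟩
      rcases Nat.lt_succ_iff_lt_or_eq.mp him with him | rfl
      exacts [habove i hji him, hm]
    · have hlow : ∑ i ∈ range m, B i * p ^ i < p ^ m :=
        sum_range_mul_pow_lt_pow fun i hi => hB i (by omega)
      have : (B m + 1) * p ^ m ≤ A m * p ^ m := Nat.mul_le_mul_right _ hm
      rw [add_one_mul] at this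
      omega

lemma dwD_self_of_lt {p x y z : ℕ} (h : y < z) : dwD p x y x z = p ^ 2 := by
  rw [dwD, if_neg (by omega), dwS, if_neg (by omega), sq]

lemma dwProduct_eq_zero {p m k : ℕ} {A B : ℕ → ℕ} (hk : 1 ≤ k) (hkm : k ≤ m - 1)
    (hzero : dwD p (A k) (A (k - 1)) (B k) (B (k - 1)) = p ^ 2) :
    (dwD p (A (m - 1)) (A (m - 2)) (B (m - 1)) (B (m - 2)) : ZMod (p ^ 2)) *
        ∏ i ∈ Icc 1 (m - 2),
          ((dwS p (A i) (B i) : ZMod (p ^ 2))⁻¹ *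
            (dwD p (A i) (A (i - 1)) (B i) (B (i - 1)) : ZMod (p ^ 2))) = 0 := by
  have hcast : ((p ^ 2 : ℕ) : ZMod (p ^ 2)) = 0 := ZMod.natCast_self _
  rcases eq_or_lt_of_le hkm with htop | hlt
  · rw [← htop, show m - 2 = k - 1 by omega, hzero, hcast, zero_mul]
  · refine mul_eq_zero_of_right _ (prod_eq_zero (mem_Icc.mpr ⟨hk, by omega⟩) ?_)
    rw [hzero, hcast, mul_zero]

theorem davis_webb_extension_general (p : ℕ) (m : ℕ)
    (A B : ℕ → ℕ) (hB : ∀ i < m, B i < p)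
    (a b : ℕ) (ha : a = ∑ i ∈ Finset.range m, A i * p ^ i)
    (hb : b = ∑ i ∈ Finset.range m, B i * p ^ i)
    (htop : A (m - 1) = B (m - 1)) (hab : a < b) :
    ((dwD p (A (m - 1)) (A (m - 2)) (B (m - 1)) (B (m - 2)) : ZMod (p ^ 2)) *
        ∏ i ∈ Finset.Icc 1 (m - 2),
          ((dwS p (A i) (B i) : ZMod (p ^ 2))⁻¹ *
            (dwD p (A i) (A (i - 1)) (B i) (B (i - 1)) : ZMod (p ^ 2))) = 0) ∧
    ((a.choose b : ZMod (p ^ 2)) =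
      (dwD p (A (m - 1)) (A (m - 2)) (B (m - 1)) (B (m - 2)) : ZMod (p ^ 2)) *
        ∏ i ∈ Finset.Icc 1 (m - 2),
          ((dwS p (A i) (B i) : ZMod (p ^ 2))⁻¹ *
            (dwD p (A i) (A (i - 1)) (B i) (B (i - 1)) : ZMod (p ^ 2)))) := by
  subst ha hb
  obtain ⟨j, hjm, hAB, habove⟩ := exists_lt_of_sum_mul_pow_lt hB hab
  have hj : j + 1 ≤ m - 1 := by
    by_contra h
    exact hAB.ne (by rw [show j = m - 1 by omega, htop])
  have hfactor : dwD p (A (j + 1)) (A (j + 1 - 1)) (B (j + 1)) (B (j + 1 - 1)) = p ^ 2 := by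
    rw [Nat.add_sub_cancel, habove (j + 1) (by omega) (by omega)]
    exact dwD_self_of_lt hAB
  have hprod := dwProduct_eq_zero (m := m) (by omega) hj hfactor
  exact ⟨hprod, by rw [Nat.choose_eq_zero_of_lt hab, Nat.cast_zero, hprod]⟩

theorem davis_webb_extension (p : ℕ) (hp : p.Prime) (m : ℕ) (hm : 2 ≤ m)
    (A B : ℕ → ℕ) (hA : ∀ i < m, A i < p) (hB : ∀ i < m, B i < p)
    (a b : ℕ) (ha : a = ∑ i ∈ Finset.range m, A i * p ^ i)
    (hb : b = ∑ i ∈ Finset.range m, B i * p ^ i)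
    (htop : A (m - 1) = B (m - 1)) (hab : a < b) :
    ((dwD p (A (m - 1)) (A (m - 2)) (B (m - 1)) (B (m - 2)) : ZMod (p ^ 2)) *
        ∏ i ∈ Finset.Icc 1 (m - 2),
          ((dwS p (A i) (B i) : ZMod (p ^ 2))⁻¹ *
            (dwD p (A i) (A (i - 1)) (B i) (B (i - 1)) : ZMod (p ^ 2))) = 0) ∧
    ((a.choose b : ZMod (p ^ 2)) =
      (dwD p (A (m - 1)) (A (m - 2)) (B (m - 1)) (B (m - 2)) : ZMod (p ^ 2)) *
        ∏ i ∈ Finset.Icc 1 (m - 2),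
          ((dwS p (A i) (B i) : ZMod (p ^ 2))⁻¹ *
            (dwD p (A i) (A (i - 1)) (B i) (B (i - 1)) : ZMod (p ^ 2)))) :=
  davis_webb_extension_general p m A B hB a b ha hb htop hab
end

section
/- Let n = 3^{m+1} + 3^m with m ≥ 1 and let i be a natural number. Then C(n, i) ≢ 0 (mod 9) if and only if i is of the form c·3^{m−1} with c ∈ {0,1,2,3,6,9,10,11,12}. Moreover, in that case C(n,i) ≡ 1 (mod 9) if c ∈ {0,12}, ≡ 3 if c ∈ {1,2,10,11}, ≡ 4 if c ∈ {3,9}, and ≡ 6 if c = 6. -/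
/-!
Modulo 9 one has `(1 + y)^9 = (1 + y^3)^3`, hence `(1 + X)^(3^(k+1)) = (1 + X^(3^k))^3` and
`(1 + X)^(3N·3^k) = (1 + X^(3^k))^(3N)` in `(ZMod 9)[X]`. Comparing coefficients,
`C(3N·3^k, i)` is `0 (mod 9)` unless `i = c·3^k`, in which case it is `C(3N, c) (mod 9)`.
For `n = 3^(m+1) + 3^m = 12·3^(m-1)` this reduces the theorem to the row `C(12, c) mod 9`.
-/

open Polynomial

theorem one_add_pow_nine {R : Type*} [CommRing R] (h9 : (9 : R) = 0) (y : R) :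
    (1 + y) ^ 9 = (1 + y ^ 3) ^ 3 := by
  linear_combination (y + 4 * y ^ 2 + 9 * y ^ 3 + 14 * y ^ 4 + 14 * y ^ 5 + 9 * y ^ 6
    + 4 * y ^ 7 + y ^ 8) * h9

theorem one_add_pow_three_pow_succ {R : Type*} [CommRing R] (h9 : (9 : R) = 0) (y : R)
    (k : ℕ) : (1 + y) ^ 3 ^ (k + 1) = (1 + y ^ 3 ^ k) ^ 3 := by
  induction k with
  | zero => simp
  | succ k ih =>
    calc (1 + y) ^ 3 ^ (k + 2) = ((1 + y) ^ 3 ^ (k + 1)) ^ 3 := by rw [← pow_mul, ← pow_succ]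
      _ = (1 + (y ^ 3 ^ k) ^ 3) ^ 3 := by rw [ih, ← pow_mul, one_add_pow_nine h9]
      _ = (1 + y ^ 3 ^ (k + 1)) ^ 3 := by rw [← pow_mul, ← pow_succ]

theorem one_add_X_pow_mul_three_pow (N k : ℕ) :
    (1 + X : (ZMod 9)[X]) ^ (3 * N * 3 ^ k) = expand (ZMod 9) (3 ^ k) ((1 + X) ^ (3 * N)) := by
  have h9 : (9 : (ZMod 9)[X]) = 0 := by exact_mod_cast CharP.cast_eq_zero (ZMod 9)[X] 9
  rw [show 3 * N * 3 ^ k = 3 ^ (k + 1) * N by ring, pow_mul, one_add_pow_three_pow_succ h9,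
    ← pow_mul]
  simp

theorem choose_mul_pow_three_mod_nine (N k c : ℕ) :
    (3 * N * 3 ^ k).choose (c * 3 ^ k) % 9 = (3 * N).choose c % 9 := by
  have h := congrArg (coeff · (c * 3 ^ k)) (one_add_X_pow_mul_three_pow N k)
  simp only [coeff_one_add_X_pow, coeff_expand_mul (pow_pos three_pos k)] at h
  exact (ZMod.natCast_eq_natCast_iff' _ _ _).mp h

theorem choose_mul_pow_three_mod_nine_of_not_dvd (N k i : ℕ) (hi : ¬ 3 ^ k ∣ i) :
    (3 * N * 3 ^ k).choose i % 9 = 0 := by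
  have h := congrArg (coeff · i) (one_add_X_pow_mul_three_pow N k)
  simp only [coeff_one_add_X_pow, coeff_expand (pow_pos three_pos k), if_neg hi] at h
  exact Nat.mod_eq_zero_of_dvd ((ZMod.natCast_eq_zero_iff _ _).mp h)

theorem choose_twelve_mod_nine_ne_zero_iff (c : ℕ) :
    (12).choose c % 9 ≠ 0 ↔ c ∈ ({0, 1, 2, 3, 6, 9, 10, 11, 12} : Finset ℕ) := by
  rcases le_or_gt c 12 with hc | hc
  · interval_cases c <;> decide
  · simp only [Nat.choose_eq_zero_of_lt hc, Finset.mem_insert, Finset.mem_singleton]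
    omega

theorem choose_mod_nine_classification (m i : ℕ) (hm : 1 ≤ m) (n : ℕ)
    (hn : n = 3 ^ (m + 1) + 3 ^ m) :
    (¬ n.choose i % 9 = 0 ↔
      ∃ c ∈ ({0, 1, 2, 3, 6, 9, 10, 11, 12} : Finset ℕ), i = c * 3 ^ (m - 1)) ∧
    (∀ c : ℕ, i = c * 3 ^ (m - 1) →
      ((c = 0 ∨ c = 12) → n.choose i % 9 = 1) ∧
      ((c = 1 ∨ c = 2 ∨ c = 10 ∨ c = 11) → n.choose i % 9 = 3) ∧
      ((c = 3 ∨ c = 9) → n.choose i % 9 = 4) ∧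
      (c = 6 → n.choose i % 9 = 6)) := by
  obtain ⟨k, rfl⟩ := Nat.exists_eq_add_of_le' hm
  rw [hn, show 3 ^ (k + 1 + 1) + 3 ^ (k + 1) = 3 * 4 * 3 ^ k by ring, Nat.add_sub_cancel]
  refine ⟨⟨fun h => ?_, ?_⟩, ?_⟩
  · by_cases hi : 3 ^ k ∣ i
    · obtain ⟨c, rfl⟩ := hi
      rw [mul_comm (3 ^ k) c, choose_mul_pow_three_mod_nine] at h
      exact ⟨c, (choose_twelve_mod_nine_ne_zero_iff c).mp h, mul_comm _ _⟩
    · exact absurd (choose_mul_pow_three_mod_nine_of_not_dvd 4 k i hi) h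
  · rintro ⟨c, hc, rfl⟩
    rw [choose_mul_pow_three_mod_nine]
    exact (choose_twelve_mod_nine_ne_zero_iff c).mpr hc
  · rintro c rfl
    rw [choose_mul_pow_three_mod_nine]
    refine ⟨?_, ?_, ?_, ?_⟩ <;> rintro (rfl | rfl | rfl | rfl) <;> decide
end

section
/- Let n = 3^{m+1} + 3^m with m ≥ 2, and let e be a positive integer whose largest base-3 digit equal to 1 occurs at position m+1 (i.e., δ_3(e) = m+1). Then p(n,e) ≡ 0 (mod 3), where p(n,e) = Σ_{i=0}^{e} 2i² k(n−1, e−i). -/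
/-!
Over any commutative ring, `∑ₑ k(r, e) Xᵉ = (1 + X)ʳ / (1 - X)ʳ⁺¹`: expand `k` against
`∑ₑ C(e, i) Xᵉ = Xⁱ / (1 - X)ⁱ⁺¹` and apply the binomial theorem to `(2X + (1 - X))ʳ`.
With `∑ᵢ i² Xⁱ = X (1 + X) / (1 - X)³` this gives `(1 - X)ⁿ⁺³ ∑ₑ p(n, e) Xᵉ = 2X (1 + X)ⁿ`.

Modulo 3 and for `n = 3ᵐ⁺¹ + 3ᵐ`, the Frobenius splits `(1 - X)ⁿ⁺³` and `(1 + X)ⁿ` into factors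
`1 ∓ X^(3^j)`, and dividing them out yields, for `e = N + 1`,
`p(n, e) ≡ 2 (1 - ⌊N / 3ᵐ⌋) (1 - ⌊N / 3ᵐ⁺¹⌋)` if `3 ∣ N` and `p(n, e) ≡ 0` otherwise.
If `3 ∣ N` then `⌊N / 3ᵐ⁺¹⌋ = ⌊e / 3ᵐ⁺¹⌋ ≡ 1 (mod 3)`, so the last factor vanishes.
-/

open PowerSeries

section GeneratingFunctions

variable {S : Type*} [CommRing S]

theorem mk_choose_mul_one_sub_pow (i : ℕ) :
    (mk fun e => (e.choose i : S)) * (1 - X) ^ (i + 1) = X ^ i := by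
  have hshift : (mk fun e => (e.choose i : S)) = X ^ i * mk fun e => ((i + e).choose i : S) := by
    ext e
    rw [coeff_X_pow_mul', coeff_mk, coeff_mk]
    split_ifs with h
    · rw [Nat.add_sub_cancel' h]
    · rw [Nat.choose_eq_zero_of_lt (not_le.mp h), Nat.cast_zero]
  rw [hshift, mul_assoc, mk_add_choose_mul_one_sub_pow_eq_one, mul_one]

theorem leeK_eq_sum_range_s15 (r e : ℕ) :
    leeK r e = ∑ i ∈ Finset.range (r + 1), 2 ^ i * r.choose i * e.choose i := by
  refine Finset.sum_subset (Finset.range_subset_range.mpr (by omega)) fun i _ hi => ?_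
  rw [Finset.mem_range, Nat.lt_succ_iff, not_le, min_lt_iff] at hi
  rcases hi with hi | hi <;> simp [Nat.choose_eq_zero_of_lt hi]

theorem one_sub_X_pow_mul_mk_leeK (r : ℕ) :
    (1 - X) ^ (r + 1) * (mk fun e => (leeK r e : S)) = (1 + X) ^ r := by
  have hsum : (mk fun e => (leeK r e : S)) =
      ∑ i ∈ Finset.range (r + 1), C (2 ^ i * r.choose i : S) * mk fun e => (e.choose i : S) := by
    ext e
    simp only [coeff_mk, leeK_eq_sum_range_s15, map_sum, coeff_C_mul, Nat.cast_sum, Nat.cast_mul,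
      Nat.cast_pow, Nat.cast_ofNat]
  calc (1 - X) ^ (r + 1) * (mk fun e => (leeK r e : S))
      = ∑ i ∈ Finset.range (r + 1), (2 * X) ^ i * (1 - X) ^ (r - i) * (r.choose i : S⟦X⟧) := by
        rw [hsum, Finset.mul_sum]
        refine Finset.sum_congr rfl fun i hi => ?_
        have hsplit : (1 - X : S⟦X⟧) ^ (r + 1) = (1 - X) ^ (r - i) * (1 - X) ^ (i + 1) := by
          rw [← pow_add]
          congr 1
          have := Finset.mem_range_succ_iff.mp hi
          omega
        simp only [hsplit, map_mul, map_pow, map_natCast, map_ofNat]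
        linear_combination (2 ^ i * (r.choose i : S⟦X⟧) * (1 - X) ^ (r - i)) *
          mk_choose_mul_one_sub_pow (S := S) i
    _ = (2 * X + (1 - X)) ^ r := (add_pow _ _ _).symm
    _ = (1 + X) ^ r := by ring

theorem sq_eq_two_mul_choose_two_add_choose_one (i : ℕ) : i ^ 2 = 2 * i.choose 2 + i.choose 1 := by
  induction i with
  | zero => rfl
  | succ i ih =>
    rw [Nat.choose_succ_succ, Nat.choose_one_right, Nat.choose_one_right] at *
    nlinarith

theorem mk_sq_mul_one_sub_pow_three :
    (mk fun i => (i : S) ^ 2) * (1 - X) ^ 3 = X * (1 + X) := by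
  have hsq : (mk fun i => (i : S) ^ 2) =
      C 2 * (mk fun i => (i.choose 2 : S)) + mk fun i => (i.choose 1 : S) := by
    ext i
    simp only [coeff_mk, map_add, coeff_C_mul]
    exact_mod_cast congrArg (Nat.cast : ℕ → S) (sq_eq_two_mul_choose_two_add_choose_one i)
  rw [hsq, map_ofNat]
  linear_combination 2 * mk_choose_mul_one_sub_pow (S := S) 2 +
    (1 - X) * mk_choose_mul_one_sub_pow (S := S) 1

theorem mk_leeP_eq_mul (n : ℕ) : (mk fun e => (leeP n e : S)) =
    C 2 * (mk fun i => (i : S) ^ 2) * mk fun e => (leeK (n - 1) e : S) := by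
  ext e
  rw [mul_assoc, coeff_C_mul, coeff_mul, Finset.Nat.sum_antidiagonal_eq_sum_range_succ_mk,
    Finset.mul_sum]
  simp only [coeff_mk, leeP, Nat.cast_sum, Nat.cast_mul, Nat.cast_pow, Nat.cast_ofNat, mul_assoc]

theorem one_sub_X_pow_mul_mk_leeP {n : ℕ} (hn : n ≠ 0) :
    (1 - X) ^ (n + 3) * (mk fun e => (leeP n e : S)) = C 2 * X * (1 + X) ^ n := by
  obtain ⟨r, rfl⟩ : ∃ r, n = r + 1 := ⟨n - 1, by omega⟩
  rw [mk_leeP_eq_mul, Nat.add_sub_cancel]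
  linear_combination C (2 : S) * (mk fun i => (i : S) ^ 2) * (1 - X) ^ 3 *
      one_sub_X_pow_mul_mk_leeK (S := S) r +
    C (2 : S) * (1 + X) ^ r * mk_sq_mul_one_sub_pow_three (S := S)

theorem one_sub_X_pow_mul_mk_ite_dvd {d : ℕ} (hd : 0 < d) :
    (1 - X ^ d) * (mk fun N => if d ∣ N then (1 : S) else 0) = 1 := by
  ext N
  rw [sub_mul, one_mul, map_sub, coeff_X_pow_mul', coeff_one]
  rcases le_or_gt d N with hN | hN
  · obtain ⟨k, rfl⟩ := Nat.exists_eq_add_of_le' hN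
    rw [if_pos hN, if_neg (by omega)]
    simp [Nat.dvd_add_self_right]
  · rw [if_neg (not_le.mpr hN), coeff_mk, sub_zero]
    by_cases hN₀ : N = 0
    · simp [hN₀]
    · have hdN : ¬d ∣ N := fun h => hN₀ (Nat.eq_zero_of_dvd_of_lt h hN)
      simp [hN₀, hdN]

end GeneratingFunctions

/-- In characteristic 3 this is
`(1 + X ^ 3 ^ m) (1 + X ^ 3 ^ (m + 1)) / ((1 - X ^ 3) (1 - X ^ 3 ^ m) (1 - X ^ 3 ^ (m + 1)))`,
as `1 - ⌊N / d⌋ = 1 + 2 ⌊N / d⌋` there. -/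
noncomputable def digitSeries (S : Type*) [CommRing S] (m : ℕ) : S⟦X⟧ :=
  mk fun N => (if 3 ∣ N then 1 else 0) * (1 - (N / 3 ^ m : ℕ)) * (1 - (N / 3 ^ (m + 1) : ℕ))

instance PowerSeries.instCharP {S : Type*} [CommRing S] (p : ℕ) [CharP S p] : CharP S⟦X⟧ p :=
  charP_of_injective_ringHom C_injective p

section CharThree

variable {S : Type*} [CommRing S] [CharP S 3]

theorem one_sub_X_pow_mul_mk_mul_one_sub_div {d : ℕ} (hd : 0 < d) {f : ℕ → S}
    (hf : ∀ N, f (N + d) = f N) :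
    (1 - X ^ d) * (mk fun N => f N * (1 - (N / d : ℕ))) = (1 + X ^ d) * mk f := by
  have h3 : (3 : S) = 0 := by exact_mod_cast CharP.cast_eq_zero S 3
  ext N
  simp only [sub_mul, add_mul, one_mul, map_sub, map_add, coeff_X_pow_mul']
  split_ifs with hN
  · obtain ⟨k, rfl⟩ := Nat.exists_eq_add_of_le' hN
    simp only [coeff_mk, Nat.add_sub_cancel, hf, Nat.add_div_right k hd, Nat.cast_add, Nat.cast_one]
    linear_combination (-f k) * h3
  · simp [Nat.div_eq_of_lt (not_le.mp hN)]

theorem mul_digitSeries {m : ℕ} (hm : m ≠ 0) :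
    (1 - X ^ 3) * (1 - X ^ 3 ^ m) * (1 - X ^ 3 ^ (m + 1)) * digitSeries S m =
      (1 + X ^ 3 ^ m) * (1 + X ^ 3 ^ (m + 1)) := by
  have h3 : (3 : S) = 0 := by exact_mod_cast CharP.cast_eq_zero S 3
  set f₀ : ℕ → S := fun N => if 3 ∣ N then 1 else 0
  have hf₀ (k : ℕ) (hk : k ≠ 0) (N : ℕ) : f₀ (N + 3 ^ k) = f₀ N := by
    simp only [f₀, Nat.dvd_add_left (dvd_pow_self 3 hk)]
  have hf₁ (N : ℕ) : f₀ (N + 3 ^ (m + 1)) * (1 - ((N + 3 ^ (m + 1)) / 3 ^ m : ℕ)) =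
      f₀ N * (1 - (N / 3 ^ m : ℕ)) := by
    rw [hf₀ _ m.succ_ne_zero, pow_succ, Nat.add_mul_div_left _ _ (by positivity)]
    push_cast
    linear_combination (-f₀ N) * h3
  have step₀ := one_sub_X_pow_mul_mk_ite_dvd (S := S) (d := 3) (by norm_num)
  have step₁ := one_sub_X_pow_mul_mk_mul_one_sub_div (S := S) (d := 3 ^ m) (by positivity)
    (hf₀ m hm)
  have step₂ := one_sub_X_pow_mul_mk_mul_one_sub_div (S := S) (d := 3 ^ (m + 1)) (by positivity)
    (f := fun N => f₀ N * (1 - (N / 3 ^ m : ℕ))) hf₁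
  unfold digitSeries
  linear_combination (1 - X ^ 3) * (1 - X ^ 3 ^ m) * step₂ +
    (1 - X ^ 3) * (1 + X ^ 3 ^ (m + 1)) * step₁ + (1 + X ^ 3 ^ m) * (1 + X ^ 3 ^ (m + 1)) * step₀

theorem mk_leeP_eq_C_two_mul_X_mul_digitSeries {m : ℕ} (hm : m ≠ 0) :
    (mk fun e => (leeP (3 ^ (m + 1) + 3 ^ m) e : S)) = C 2 * X * digitSeries S m := by
  set n := 3 ^ (m + 1) + 3 ^ m
  have hunit : IsUnit ((1 - X : S⟦X⟧) ^ (n + 3)) :=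
    (IsUnit.of_mul_eq_one _ (by rw [mul_comm]; exact mk_one_mul_one_sub_eq_one S)).pow _
  have hsub : (1 - X : S⟦X⟧) ^ (n + 3) =
      (1 - X ^ 3) * (1 - X ^ 3 ^ m) * (1 - X ^ 3 ^ (m + 1)) := by
    rw [show n + 3 = 3 ^ 1 + 3 ^ m + 3 ^ (m + 1) by ring, pow_add, pow_add, sub_pow_char_pow,
      sub_pow_char_pow, sub_pow_char_pow, one_pow, one_pow, one_pow, pow_one]
  have hadd : (1 + X : S⟦X⟧) ^ n = (1 + X ^ 3 ^ m) * (1 + X ^ 3 ^ (m + 1)) := by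
    rw [show n = 3 ^ m + 3 ^ (m + 1) by ring, pow_add, add_pow_char_pow, add_pow_char_pow,
      one_pow, one_pow]
  refine hunit.mul_left_cancel ?_
  rw [one_sub_X_pow_mul_mk_leeP (by positivity), hadd, hsub]
  linear_combination (-(C 2 * X)) * mul_digitSeries (S := S) hm

theorem coeff_digitSeries_eq_zero {m N : ℕ} (hN : (N + 1) / 3 ^ (m + 1) % 3 = 1) :
    coeff N (digitSeries S m) = 0 := by
  rw [digitSeries, coeff_mk]
  by_cases h3 : 3 ∣ N
  · have hnd : ¬3 ^ (m + 1) ∣ N + 1 := fun h => by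
      have := (dvd_pow_self 3 m.succ_ne_zero).trans h
      omega
    rw [← Nat.succ_div_of_not_dvd hnd, CharP.cast_eq_mod S 3 ((N + 1) / 3 ^ (m + 1)), hN,
      Nat.cast_one, sub_self, mul_zero]
  · simp [h3]

end CharThree

theorem leeP_dvd_three_general (m e : ℕ) (hm : 2 ≤ m)
    (hd : (e / 3 ^ (m + 1)) % 3 = 1)
    (n : ℕ) (hn : n = 3 ^ (m + 1) + 3 ^ m) :
    3 ∣ leeP n e := by
  have he : e ≠ 0 := by
    rintro rfl
    simp at hd
  obtain ⟨N, rfl⟩ : ∃ N, e = N + 1 := ⟨e - 1, by omega⟩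
  rw [← ZMod.natCast_eq_zero_iff, hn]
  have h := congrArg (coeff (N + 1))
    (mk_leeP_eq_C_two_mul_X_mul_digitSeries (S := ZMod 3) (m := m) (by omega))
  rwa [coeff_mk, mul_assoc, coeff_C_mul, coeff_succ_X_mul, coeff_digitSeries_eq_zero hd,
    mul_zero] at h

theorem leeP_dvd_three (m e : ℕ) (hm : 2 ≤ m) (he : 0 < e)
    (hd : (e / 3 ^ (m + 1)) % 3 = 1)
    (hrest : ∀ i, m + 1 < i → (e / 3 ^ i) % 3 ≠ 1)
    (n : ℕ) (hn : n = 3 ^ (m + 1) + 3 ^ m) :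
    3 ∣ leeP n e :=
  leeP_dvd_three_general m e hm hd n hn
end

section
/- For the 3-dimensional Euclidean ball B = {b ∈ ℤ³ : b_1² + b_2² + b_3² ≤ 64}, one has #B = 2109 = 3·703 with 3 ∤ 703, and Σ_{b ∈ B} b_1² = 26688 ≡ 0 (mod 3). Consequently there is no lattice tiling of ℤ³ by B, i.e., no subgroup Λ ≤ ℤ³ such that the translates b + Λ for b ∈ B partition ℤ³ (equivalently, no abelian group G of order 2109 admits a homomorphism φ : ℤ³ → G restricting to a bijection on B). -/
/-!
Suppose `φ : ℤ³ →+ G` maps the ball `B` bijectively onto `G`, so `|G| = |B| = 3 · 703`, and pick a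
surjection `ψ : G →+ ℤ/3`. Then `∑_{b ∈ B} ψ(φ b)² = ∑_{g ∈ G} ψ(g)²`, and as every fibre of `ψ` has
`703` elements this is `703 · (0² + 1² + 2²) ≡ 2 (mod 3)`. But `ψ ∘ φ` is a linear form
`b ↦ ∑ aᵢ bᵢ`, so the same sum is `∑ aᵢ aⱼ ∑_{b ∈ B} bᵢ bⱼ`, and all second moments of the ball are
divisible by `3`. A lattice tiling by `B` would give such a `φ`: the projection onto `ℤ³ ⧸ Λ`.
-/

open Finset

theorem Module.exists_surjective_dual {K V : Type*} [Field K] [AddCommGroup V] [Module K V]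
    [Nontrivial V] : ∃ f : V →ₗ[K] K, Function.Surjective f := by
  obtain ⟨x, hx⟩ := exists_ne (0 : V)
  obtain ⟨f, hf⟩ : ∃ f : V →ₗ[K] K, f x ≠ 0 := by
    by_contra! h
    exact hx ((forall_dual_apply_eq_zero_iff K x).mp h)
  exact ⟨f, LinearMap.surjective_of_ne_zero (by rintro rfl; exact hf rfl)⟩

theorem AddCommGroup.exists_surjective_zmod_of_dvd_card {G : Type*} [AddCommGroup G] [Finite G]
    (p : ℕ) [hp : Fact p.Prime] (hdvd : p ∣ Nat.card G) :
    ∃ ψ : G →+ ZMod p, Function.Surjective ψ := by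
  set pG := (nsmulAddMonoidHom p : G →+ G).range
  have hpG : pG ≠ ⊤ := by
    obtain ⟨g, hg⟩ := exists_prime_addOrderOf_dvd_card' p hdvd
    intro htop
    have hinj : Function.Injective (nsmulAddMonoidHom p : G →+ G) :=
      Finite.injective_iff_surjective.mpr (AddMonoidHom.range_eq_top.mp htop)
    have hg0 : g = 0 := hinj (by simp [← hg, addOrderOf_nsmul_eq_zero])
    simp [hg0, hp.out.ne_one.symm] at hg
  -- `G ⧸ pG` is a nonzero vector space over `ZMod p`; any nonzero functional on it is onto.
  have : Nontrivial (G ⧸ pG) := QuotientAddGroup.nontrivial_iff.mpr hpG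
  let := QuotientAddGroup.zmodModule (n := p) (H := pG) fun x => ⟨x, rfl⟩
  obtain ⟨f, hf⟩ := Module.exists_surjective_dual (K := ZMod p) (V := G ⧸ pG)
  exact ⟨f.toAddMonoidHom.comp (QuotientAddGroup.mk' pG),
    hf.comp (QuotientAddGroup.mk'_surjective pG)⟩

theorem AddMonoidHom.sum_comp_of_surjective {G H M : Type*} [AddGroup G] [Fintype G] [AddMonoid H]
    [Fintype H] [DecidableEq H] [AddCommMonoid M] (ψ : G →+ H) (hψ : Function.Surjective ψ)
    (f : H → M) : ∑ g, f (ψ g) = #{g | ψ g = 0} • ∑ h, f h := by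
  rw [← sum_fiberwise univ ψ (fun g => f (ψ g)), smul_sum]
  refine sum_congr rfl fun h _ => ?_
  rw [sum_congr rfl fun g hg => by rw [(mem_filter.mp hg).2], sum_const,
    AddMonoidHom.card_fiber_eq_of_mem_range ψ (hψ h) ⟨0, map_zero ψ⟩]

theorem AddMonoidHom.sum_apply_sq {ι R : Type*} [Fintype ι] [DecidableEq ι] [CommRing R]
    (χ : (ι → ℤ) →+ R) (B : Finset (ι → ℤ)) :
    ∑ b ∈ B, χ b ^ 2 =
      ∑ i, ∑ j, χ (Pi.single i 1) * χ (Pi.single j 1) * ((∑ b ∈ B, b i * b j : ℤ) : R) := by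
  have hχ (b : ι → ℤ) : χ b = ∑ i, (b i : R) * χ (Pi.single i 1) := by
    conv_lhs => rw [← univ_sum_single b]
    refine (map_sum χ _ _).trans (sum_congr rfl fun i _ => ?_)
    rw [← zsmul_eq_mul, ← map_zsmul, ← Pi.single_smul', smul_eq_mul, mul_one]
  calc ∑ b ∈ B, χ b ^ 2
      = ∑ b ∈ B, ∑ i, ∑ j, χ (Pi.single i 1) * χ (Pi.single j 1) * ((b i * b j : ℤ) : R) := by
        refine sum_congr rfl fun b _ => ?_
        rw [hχ b, sq, sum_mul_sum]
        exact sum_congr rfl fun i _ => sum_congr rfl fun j _ => by push_cast; ring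
    _ = _ := by
        simp_rw [Int.cast_sum, mul_sum]
        rw [sum_comm]
        exact sum_congr rfl fun i _ => sum_comm

theorem not_bijOn_univ_of_three_dvd_sum_mul {ι G : Type*} [Fintype ι] [DecidableEq ι]
    [AddCommGroup G] (B : Finset (ι → ℤ)) (hB : ∀ i j, (3 : ℤ) ∣ ∑ b ∈ B, b i * b j)
    (h3 : 3 ∣ #B) (h9 : ¬ 9 ∣ #B) (φ : (ι → ℤ) →+ G) : ¬ Set.BijOn φ B Set.univ := by
  intro hφ
  have : Finite G := Set.finite_univ_iff.mp (hφ.image_eq ▸ B.finite_toSet.image φ)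
  have := Fintype.ofFinite G
  have hcard : Nat.card G = #B := by
    rw [← Set.ncard_univ, ← hφ.ncard_eq, Set.ncard_coe_finset]
  obtain ⟨ψ, hψ⟩ := AddCommGroup.exists_surjective_zmod_of_dvd_card 3 (hcard ▸ h3)
  set k := #{g | ψ g = 0}
  have hk : Nat.card G = k * 3 := by
    simpa [Nat.card_eq_fintype_card] using ψ.sum_comp_of_surjective hψ fun _ => (1 : ℕ)
  have hsum_B : ∑ b ∈ B, ψ (φ b) ^ 2 = 0 := by
    rw [show ∑ b ∈ B, ψ (φ b) ^ 2 = ∑ b ∈ B, ψ.comp φ b ^ 2 from rfl, AddMonoidHom.sum_apply_sq]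
    simp [(ZMod.intCast_zmod_eq_zero_iff_dvd _ 3).mpr (hB _ _)]
  have hsum_G : ∑ g, ψ g ^ 2 = ((2 * k : ℕ) : ZMod 3) := by
    rw [ψ.sum_comp_of_surjective hψ (· ^ 2), show ∑ z : ZMod 3, z ^ 2 = 2 by decide]
    push_cast
    ring
  have htransfer : ∑ b ∈ B, ψ (φ b) ^ 2 = ∑ g, ψ g ^ 2 :=
    sum_nbij φ (fun _ _ => mem_univ _) hφ.injOn (by simpa using hφ.surjOn) fun _ _ => rfl
  rw [hsum_B, hsum_G, eq_comm, ZMod.natCast_eq_zero_iff] at htransfer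
  omega

def AddSubgroup.IsTiling {M : Type*} [AddCommGroup M] (Λ : AddSubgroup M) (B : Set M) : Prop :=
  ∀ x : M, ∃! q : M × M, q.1 ∈ B ∧ q.2 ∈ Λ ∧ q.1 + q.2 = x

theorem AddSubgroup.IsTiling.bijOn_mk' {M : Type*} [AddCommGroup M] {Λ : AddSubgroup M}
    {B : Set M} (hΛ : Λ.IsTiling B) : Set.BijOn (QuotientAddGroup.mk' Λ) B Set.univ := by
  refine ⟨Set.mapsTo_univ _ _, fun b₁ hb₁ b₂ hb₂ h => ?_, fun x _ => ?_⟩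
  · obtain ⟨z, hz, hsum⟩ := (QuotientAddGroup.mk'_eq_mk' Λ).mp h
    obtain ⟨_, _, huniq⟩ := hΛ b₂
    exact congrArg Prod.fst ((huniq (b₁, z) ⟨hb₁, hz, hsum⟩).trans
      (huniq (b₂, 0) ⟨hb₂, Λ.zero_mem, add_zero b₂⟩).symm)
  · obtain ⟨y, rfl⟩ := QuotientAddGroup.mk'_surjective Λ x
    obtain ⟨⟨b, z⟩, ⟨hb, hz, hsum⟩, _⟩ := hΛ y
    exact ⟨b, hb, (QuotientAddGroup.mk'_eq_mk' Λ).mpr ⟨z, hz, hsum⟩⟩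

noncomputable def intBall (n r : ℕ) : Finset (Fin n → ℤ) :=
  {b ∈ Fintype.piFinset fun _ => Icc (-(r : ℤ)) r | ∑ i, b i ^ 2 ≤ (r : ℤ) ^ 2}

theorem coe_intBall (n r : ℕ) :
    (intBall n r : Set (Fin n → ℤ)) = {b | ∑ i, b i ^ 2 ≤ (r : ℤ) ^ 2} := by
  ext b
  simp only [intBall, coe_filter, Fintype.mem_piFinset, mem_Icc, Set.mem_ofPred_eq,
    and_iff_right_iff_imp]
  intro h i
  have hi : b i ^ 2 ≤ (r : ℤ) ^ 2 :=
    (single_le_sum (fun j _ => sq_nonneg (b j)) (mem_univ i)).trans h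
  exact abs_le_of_sq_le_sq' hi (by positivity)

set_option maxRecDepth 10000 in
theorem card_intBall_three_eight : #(intBall 3 8) = 2109 := by decide

set_option maxRecDepth 100000 in
theorem sum_intBall_three_eight_sq : ∑ b ∈ intBall 3 8, b 0 ^ 2 = 26688 := by decide

set_option maxRecDepth 100000 in
theorem three_dvd_sum_intBall_three_eight_mul :
    ∀ i j : Fin 3, (3 : ℤ) ∣ ∑ b ∈ intBall 3 8, b i * b j := by decide

theorem no_lattice_tiling_euclidean_ball (B : Set (Fin 3 → ℤ))
    (hB : B = {b | b 0 ^ 2 + b 1 ^ 2 + b 2 ^ 2 ≤ 64}) :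
    B.ncard = 2109 ∧ 2109 = 3 * 703 ∧ ¬ (3 ∣ 703) ∧
    (∑ᶠ b ∈ B, (b 0) ^ 2) = (26688 : ℤ) ∧ (3 : ℤ) ∣ 26688 ∧
    (¬ ∃ Λ : AddSubgroup (Fin 3 → ℤ), ∀ x : Fin 3 → ℤ,
      ∃! q : (Fin 3 → ℤ) × (Fin 3 → ℤ), q.1 ∈ B ∧ q.2 ∈ Λ ∧ q.1 + q.2 = x) ∧
    (∀ (G : Type) [AddCommGroup G], Nat.card G = 2109 →
      ∀ φ : (Fin 3 → ℤ) →+ G, ¬ Set.BijOn φ B Set.univ) := by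
  have hB_ball : B = intBall 3 8 := by
    simp [hB, coe_intBall, Fin.sum_univ_three]
  subst hB_ball
  have hno_hom (G : Type) [AddCommGroup G] (φ : (Fin 3 → ℤ) →+ G) :
      ¬ Set.BijOn φ (intBall 3 8) Set.univ :=
    not_bijOn_univ_of_three_dvd_sum_mul _ three_dvd_sum_intBall_three_eight_mul
      (by rw [card_intBall_three_eight]; norm_num) (by rw [card_intBall_three_eight]; norm_num) φ
  refine ⟨by rw [Set.ncard_coe_finset, card_intBall_three_eight], rfl, by norm_num,
    by rw [finsum_mem_coe_finset, sum_intBall_three_eight_sq], by norm_num,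
    fun ⟨Λ, hΛ⟩ => hno_hom _ _ (AddSubgroup.IsTiling.bijOn_mk' hΛ), fun G _ _ => hno_hom G⟩
end
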